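/- Let U ⊆ V ⊆ R^d be submodules and ≺ a monomial order on R^d. Let G_V = {g_1,…,g_t} be the reduced Gröbner basis of V relative to U, let G_U = {g_{t+1},…,g_s} be a Gröbner basis of U, and set G = G_V ∪ G_U. For all 1 ≤ i < j ≤ s with S(g_i, g_j) ≠ 0, choose a standard representation S(g_i, g_j) = Σ_{k=1}^s a_{ijk} g_k with lt(a_{ijk} g_k) ⪯ lt(S(g_i, g_j)), and define S_{ij} := (lcm(lm(g_i), lm(g_j))/lt(g_i)) e_i − (lcm(lm(g_i), lm(g_j))/lt(g_j)) e_j − Σ_{k=1}^s a_{ijk} e_k ∈ R^s. Let ψ : R^t → V/U be the R-linear map sending e_i to g_i + U, and let π : R^s → R^t be the projection onto the first t coordinates. Then the set H^{(1)} := {π(S_{ij}) : 1 ≤ i < j ≤ s, i ≤ t} is a Gröbner basis of ker(ψ) = Syz(g_1+U,…,g_t+U) with respect to the Schreyer order ≺_G restricted to module monomials X^α e_i with i ≤ t. -/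

import Mathlib

attribute [local instance] Classical.propDecidable

noncomputable section

/-- Module monomial index: an exponent vector together with a component index. -/
abbrev ModMon (n d : ℕ) := (Fin n →₀ ℕ) × Fin d

/-- The free module `R^d` over `R = k[X_1, …, X_n]`. -/
abbrev FreeMod (k : Type*) [Field k] (n d : ℕ) := Fin d → MvPolynomial (Fin n) k

variable {k : Type*} [Field k] {n d : ℕ}

/-- The module monomial `X^α e_i` as an element of `R^d`. -/
def mmVec (m : ModMon n d) : FreeMod k n d :=
  Pi.single m.2 (MvPolynomial.monomial m.1 (1 : k))

/-- The support of `f ∈ R^d` as a finite set of module monomials. -/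
def suppF (f : FreeMod k n d) : Finset (ModMon n d) :=
  (Finset.univ : Finset (Fin d)).biUnion fun i =>
    ((f i).support.image fun a => ((a, i) : ModMon n d))

/-- A monomial order on `R^d`: a well-founded total order on module monomials such that
`e_i ⪯ X^α e_i` and which is compatible with multiplication by monomials. -/
structure ModMonOrder (n d : ℕ) where
  toOrd : LinearOrder (ModMon n d)
  wf : WellFounded toOrd.lt
  base_le : ∀ (i : Fin d) (a : Fin n →₀ ℕ), toOrd.le (0, i) (a, i)
  add_le : ∀ (a b c : Fin n →₀ ℕ) (i j : Fin d),
    toOrd.le (b, i) (c, j) → toOrd.le (a + b, i) (a + c, j)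

namespace ModMonOrder

variable (ord : ModMonOrder n d)

/-- The leading monomial of `f` (`⊥` if `f = 0`). -/
def lmo (f : FreeMod k n d) : WithBot (ModMon n d) :=
  letI := ord.toOrd
  (suppF f).max

/-- The order on leading monomials, extended to `WithBot` (with `⊥` smallest). -/
def leB (x y : WithBot (ModMon n d)) : Prop :=
  WithBot.recBotCoe True
    (fun a => WithBot.recBotCoe False (fun b => ord.toOrd.le a b) y) x

/-- The leading coefficient of `f` (`0` if `f = 0`). -/
def lc (f : FreeMod k n d) : k :=
  WithBot.recBotCoe 0 (fun m => (f m.2).coeff m.1) (ord.lmo f)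

/-- The leading monomial of `f`, as an element of `R^d` (`0` if `f = 0`). -/
def lmVec (f : FreeMod k n d) : FreeMod k n d :=
  WithBot.recBotCoe 0 (fun m => mmVec m) (ord.lmo f)

/-- `lm(W)`: the submodule generated by the leading monomials of nonzero elements of `W`. -/
def lmSub (W : Submodule (MvPolynomial (Fin n) k) (FreeMod k n d)) :
    Submodule (MvPolynomial (Fin n) k) (FreeMod k n d) :=
  Submodule.span (MvPolynomial (Fin n) k) {v | ∃ f ∈ W, f ≠ 0 ∧ v = ord.lmVec f}

end ModMonOrder

/-- Divisibility in `R^d`: `u` divides `v` iff `v = p • u` for some polynomial `p`. -/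
def dvdV (u v : FreeMod k n d) : Prop := ∃ p : MvPolynomial (Fin n) k, v = p • u

/-- `G` is a Gröbner basis of the submodule `W ⊆ R^d`. -/
def IsGB (ord : ModMonOrder n d) (W : Submodule (MvPolynomial (Fin n) k) (FreeMod k n d))
    (G : Finset (FreeMod k n d)) : Prop :=
  Submodule.span (MvPolynomial (Fin n) k) (G : Set (FreeMod k n d)) = W ∧
  Submodule.span (MvPolynomial (Fin n) k) (ord.lmVec '' (G : Set (FreeMod k n d))) = ord.lmSub W

/-- `G` is the reduced Gröbner basis of `W ⊆ R^d`. -/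
def IsRedGB (ord : ModMonOrder n d) (W : Submodule (MvPolynomial (Fin n) k) (FreeMod k n d))
    (G : Finset (FreeMod k n d)) : Prop :=
  IsGB ord W G ∧
  (∀ g ∈ G, ∀ g' ∈ G, g ≠ g' → ¬ dvdV (ord.lmVec g) (ord.lmVec g')) ∧
  ∀ g ∈ G, ord.lc g = 1 ∧ ∀ m ∈ suppF (g - ord.lmVec g), mmVec m ∉ ord.lmSub W

/-- `p` is a normal form of `f` modulo `U`: `f - p ∈ U` and `p` is supported on
module monomials outside `lm(U)`. -/
def IsNF (ord : ModMonOrder n d) (U : Submodule (MvPolynomial (Fin n) k) (FreeMod k n d))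
    (f p : FreeMod k n d) : Prop :=
  f - p ∈ U ∧ ∀ m ∈ suppF p, mmVec m ∉ ord.lmSub U

/-- `H` is a Gröbner basis of `V` relative to `U`. -/
def IsRelGB (ord : ModMonOrder n d) (U V : Submodule (MvPolynomial (Fin n) k) (FreeMod k n d))
    (H : Finset (FreeMod k n d)) : Prop :=
  (H : Set (FreeMod k n d)) ⊆ (V : Set (FreeMod k n d)) \ (U : Set (FreeMod k n d)) ∧
  (∀ h ∈ H, ∀ m ∈ suppF h, mmVec m ∉ ord.lmSub U) ∧
  Submodule.span (MvPolynomial (Fin n) k) (ord.lmVec '' (H : Set (FreeMod k n d))) ⊔ ord.lmSub U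
    = ord.lmSub V

/-- `H` is a minimal Gröbner basis of `V` relative to `U`. -/
def IsMinRelGB (ord : ModMonOrder n d) (U V : Submodule (MvPolynomial (Fin n) k) (FreeMod k n d))
    (H : Finset (FreeMod k n d)) : Prop :=
  IsRelGB ord U V H ∧
  ∀ h ∈ H, ∀ h' ∈ H, h ≠ h' → ¬ dvdV (ord.lmVec h) (ord.lmVec h')

/-- `H` is the reduced Gröbner basis of `V` relative to `U`. -/
def IsRedRelGB (ord : ModMonOrder n d) (U V : Submodule (MvPolynomial (Fin n) k) (FreeMod k n d))
    (H : Finset (FreeMod k n d)) : Prop :=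
  IsMinRelGB ord U V H ∧
  ∀ h ∈ H, ord.lc h = 1 ∧ ∀ m ∈ suppF (h - ord.lmVec h), mmVec m ∉ ord.lmSub V

end

noncomputable section
variable {k : Type*} [Field k] {n d : ℕ}

/-- The S-polynomial `S(f, g)` (0 if the leading monomials are in different components or
one of `f, g` is zero). -/
def sPoly (ord : ModMonOrder n d) (f g : FreeMod k n d) : FreeMod k n d :=
  WithBot.recBotCoe 0 (fun mf =>
    WithBot.recBotCoe 0 (fun mg =>
      if mf.2 = mg.2 then
        (MvPolynomial.monomial ((mf.1 ⊔ mg.1) - mf.1) (ord.lc f)⁻¹) • f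
          - (MvPolynomial.monomial ((mf.1 ⊔ mg.1) - mg.1) (ord.lc g)⁻¹) • g
      else 0) (ord.lmo g)) (ord.lmo f)

/-- The map `R^t → R^d`, `v ↦ ∑ i, v i • g i`. -/
def combMap {t : ℕ} (g : Fin t → FreeMod k n d) :
    FreeMod k n t →ₗ[MvPolynomial (Fin n) k] FreeMod k n d where
  toFun v := ∑ i, v i • g i
  map_add' v w := by simp [add_smul, Finset.sum_add_distrib]
  map_smul' c v := by simp [Finset.smul_sum, smul_smul]

/-- The Schreyer syzygy `S_{ij}` attached to a family `g` and chosen standard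
representations `a` of the S-polynomials. -/
def schreyerVec {s : ℕ} (ord : ModMonOrder n d) (g : Fin s → FreeMod k n d)
    (a : Fin s → Fin s → Fin s → MvPolynomial (Fin n) k) (i j : Fin s) :
    FreeMod k n s :=
  WithBot.recBotCoe 0 (fun mi =>
    WithBot.recBotCoe 0 (fun mj =>
      if mi.2 = mj.2 then
        Pi.single (M := fun _ : Fin s => MvPolynomial (Fin n) k) i
            (MvPolynomial.monomial ((mi.1 ⊔ mj.1) - mi.1) (ord.lc (g i))⁻¹)
          - Pi.single (M := fun _ : Fin s => MvPolynomial (Fin n) k) j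
            (MvPolynomial.monomial ((mi.1 ⊔ mj.1) - mj.1) (ord.lc (g j))⁻¹)
          - (fun l => a i j l)
      else 0) (ord.lmo (g j))) (ord.lmo (g i))

end

/-!
Let `v` be a syzygy of `g_1 + U, …, g_t + U` whose Schreyer leading term is `X^α e_i`. By the
definition of the Schreyer order, `X^α lm(g_i)` dominates every product of a term of `v_l` with
`lm(g_l)`, and is attained only for indices `l ≥ i`. If it is attained for some `l > i`, then
`lcm(lm g_i, lm g_l)` divides `X^α lm(g_i)`. Otherwise no leading term cancels, so
`Σ v_l g_l ∈ U` has leading monomial `X^α lm(g_i) ∈ lm(U)`, which is then divisible by `lm(g_j)`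
for some `j > t`. In either case the standard representation of `S(g_i, g_j)` gives
`lm(π S_ij) = (lcm(lm g_i, lm g_j) / lm g_i) e_i`, which divides `X^α e_i`. As the `π S_ij` are
themselves syzygies, division by them reduces every syzygy to zero.
-/

section

open MvPolynomial

variable {k : Type*} [Field k] {n d : ℕ}

-- `ModMon n d` already carries the product order, so a monomial order is always named explicitly.
local notation:50 x:51 " ≼[" o "] " y:51 =>
  @LE.le _ (@Preorder.toLE _
    (@PartialOrder.toPreorder _ (@LinearOrder.toPartialOrder _ (ModMonOrder.toOrd o)))) x y
local notation:50 x:51 " ≺[" o "] " y:51 =>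
  @LT.lt _ (@Preorder.toLT _
    (@PartialOrder.toPreorder _ (@LinearOrder.toPartialOrder _ (ModMonOrder.toOrd o)))) x y

theorem mem_suppF {f : FreeMod k n d} {m : ModMon n d} :
    m ∈ suppF f ↔ (f m.2).coeff m.1 ≠ 0 := by
  simp [suppF, Prod.ext_iff]

theorem suppF_eq_empty {f : FreeMod k n d} : suppF f = ∅ ↔ f = 0 := by
  simp only [Finset.eq_empty_iff_forall_notMem, mem_suppF, not_not, Prod.forall]
  exact ⟨fun h => funext fun i => MvPolynomial.ext _ _ fun a => h a i, fun h a i => by simp [h]⟩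

theorem suppF_mmVec (m : ModMon n d) : suppF (mmVec m : FreeMod k n d) = {m} := by
  ext ⟨a, i⟩
  by_cases hi : i = m.2 <;> by_cases ha : m.1 = a <;>
    simp [mem_suppF, mmVec, coeff_monomial, Prod.ext_iff, hi, ha, eq_comm]

theorem mem_suppF_add {u v : FreeMod k n d} {m : ModMon n d} (h : m ∈ suppF (u + v)) :
    m ∈ suppF u ∨ m ∈ suppF v := by
  simp only [mem_suppF, Pi.add_apply, coeff_add] at h ⊢
  by_contra! h'
  simp [h'.1, h'.2] at h

theorem exists_mem_suppF_of_mem_suppF_sum {ι : Type*} (S : Finset ι) (F : ι → FreeMod k n d)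
    {m : ModMon n d} (hm : m ∈ suppF (∑ l ∈ S, F l)) : ∃ l ∈ S, m ∈ suppF (F l) := by
  rw [mem_suppF, Finset.sum_apply, coeff_sum] at hm
  obtain ⟨l, hl, h⟩ := Finset.exists_ne_zero_of_sum_ne_zero hm
  exact ⟨l, hl, mem_suppF.2 h⟩

theorem exists_add_eq_of_mem_suppF_smul {p : MvPolynomial (Fin n) k} {f : FreeMod k n d}
    {m : ModMon n d} (hm : m ∈ suppF (p • f)) :
    ∃ x y, x + y = m.1 ∧ x ∈ p.support ∧ ((y, m.2) : ModMon n d) ∈ suppF f := by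
  rw [mem_suppF, Pi.smul_apply, smul_eq_mul, coeff_mul] at hm
  obtain ⟨⟨x, y⟩, hxy, h⟩ := Finset.exists_ne_zero_of_sum_ne_zero hm
  exact ⟨x, y, Finset.HasAntidiagonal.mem_antidiagonal.1 hxy,
    mem_support_iff.2 (left_ne_zero_of_mul h), mem_suppF.2 (right_ne_zero_of_mul h)⟩

/-- `X^{m'.1} e_{m'.2}` divides `X^{m.1} e_{m.2}`. -/
def MonDvd (m' m : ModMon n d) : Prop := m'.2 = m.2 ∧ m'.1 ≤ m.1

theorem monomial_smul_mmVec {m' m : ModMon n d} (h : MonDvd m' m) :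
    monomial (m.1 - m'.1) (1 : k) • (mmVec m' : FreeMod k n d) = mmVec m := by
  funext c
  simp only [mmVec, Pi.smul_apply, Pi.single_apply, h.1, smul_eq_mul]
  split_ifs
  · rw [monomial_mul, one_mul, tsub_add_cancel_of_le h.2]
  · rw [mul_zero]

namespace ModMonOrder

variable (ord : ModMonOrder n d)

theorem lmo_eq_bot_iff {f : FreeMod k n d} : ord.lmo f = ⊥ ↔ f = 0 := by
  let _ := ord.toOrd
  rw [lmo, Finset.max_eq_bot, suppF_eq_empty]

theorem exists_lmo_eq {f : FreeMod k n d} (hf : f ≠ 0) :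
    ∃ m : ModMon n d, ord.lmo f = m :=
  WithBot.ne_bot_iff_exists.1 (mt (ord.lmo_eq_bot_iff).1 hf) |>.imp fun _ h => h.symm

variable {ord}

theorem mem_suppF_of_lmo_eq {f : FreeMod k n d} {m : ModMon n d} (h : ord.lmo f = m) :
    m ∈ suppF f := by
  let _ := ord.toOrd
  exact Finset.mem_of_max h

theorem le_of_mem_suppF {f : FreeMod k n d} {m m' : ModMon n d} (h : ord.lmo f = m)
    (h' : m' ∈ suppF f) : m' ≼[ord] m := by
  let _ := ord.toOrd
  exact Finset.le_max_of_eq h' h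

theorem lmo_eq_of_mem_of_forall_le {f : FreeMod k n d} {m : ModMon n d} (hm : m ∈ suppF f)
    (hle : ∀ m' ∈ suppF f, m' ≼[ord] m) : ord.lmo f = m := by
  obtain ⟨m₀, hm₀⟩ := ord.exists_lmo_eq (f := f) (by rintro rfl; simp [suppF_eq_empty.2] at hm)
  rw [hm₀, ord.toOrd.le_antisymm m₀ m (hle m₀ (mem_suppF_of_lmo_eq hm₀)) (le_of_mem_suppF hm₀ hm)]

theorem lc_eq_coeff {f : FreeMod k n d} {m : ModMon n d} (h : ord.lmo f = m) :
    ord.lc f = (f m.2).coeff m.1 := by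
  rw [lc, h]; rfl

theorem lc_ne_zero {f : FreeMod k n d} {m : ModMon n d} (h : ord.lmo f = m) : ord.lc f ≠ 0 := by
  rw [lc_eq_coeff h]
  exact mem_suppF.1 (mem_suppF_of_lmo_eq h)

theorem lmVec_eq {f : FreeMod k n d} {m : ModMon n d} (h : ord.lmo f = m) :
    ord.lmVec f = mmVec m := by
  rw [lmVec, h]; rfl

variable (ord) in
theorem lmVec_zero : ord.lmVec (0 : FreeMod k n d) = 0 := by
  rw [lmVec, (ord.lmo_eq_bot_iff).2 rfl]; rfl

theorem leB_coe_coe {x y : ModMon n d} : ord.leB x y ↔ x ≼[ord] y :=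
  Iff.rfl

theorem leB_trans {x y z : WithBot (ModMon n d)} (h₁ : ord.leB x y) (h₂ : ord.leB y z) :
    ord.leB x z := by
  cases x <;> cases y <;> cases z <;> simp_all [leB]
  exact ord.toOrd.le_trans _ _ _ h₁ h₂

theorem lt_of_leB_lmo {f : FreeMod k n d} {x M : ModMon n d} (h : ord.leB x (ord.lmo f))
    (hf : ∀ m ∈ suppF f, m ≺[ord] M) : x ≺[ord] M := by
  cases hfm : ord.lmo f with
  | bot => simp [hfm, leB] at h
  | coe m =>
    rw [hfm, leB_coe_coe] at h
    exact @lt_of_le_of_lt _ ord.toOrd.toPreorder _ _ _ h (hf m (mem_suppF_of_lmo_eq hfm))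

theorem suppF_sub_lt {f h : FreeMod k n d} {M : ModMon n d}
    (hf : ∀ m ∈ suppF f, m ≼[ord] M) (hh : ∀ m ∈ suppF h, m ≼[ord] M)
    (hc : (f M.2).coeff M.1 = (h M.2).coeff M.1) : ∀ m ∈ suppF (f - h), m ≺[ord] M := by
  intro m hm
  have hne : (f m.2).coeff m.1 ≠ (h m.2).coeff m.1 := by
    rw [mem_suppF, Pi.sub_apply, coeff_sub] at hm
    exact sub_ne_zero.1 hm
  have hle : m ≼[ord] M := by
    by_cases h0 : (f m.2).coeff m.1 = 0
    · exact hh m (mem_suppF.2 (h0 ▸ hne.symm))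
    · exact hf m (mem_suppF.2 h0)
  exact @lt_of_le_of_ne _ ord.toOrd.toPartialOrder _ _ hle (by rintro rfl; exact hne hc)

theorem exists_le_of_mem_suppF_smul {p : MvPolynomial (Fin n) k} {f : FreeMod k n d}
    {m m' : ModMon n d} (hf : ord.lmo f = m) (hm' : m' ∈ suppF (p • f)) :
    ∃ δ ∈ p.support, m' ≼[ord] (δ + m.1, m.2) := by
  obtain ⟨x, y, hxy, hx, hy⟩ := exists_add_eq_of_mem_suppF_smul hm'
  refine ⟨x, hx, ?_⟩
  rw [← Prod.mk.eta (p := m'), ← hxy]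
  exact ord.add_le x _ _ _ _ (le_of_mem_suppF hf hy)

theorem coeff_smul_of_forall_le {p : MvPolynomial (Fin n) k} {f : FreeMod k n d}
    {m : ModMon n d} {δ₀ : Fin n →₀ ℕ} (hf : ord.lmo f = m)
    (hmax : ∀ δ ∈ p.support, (δ + m.1, m.2) ≼[ord] (δ₀ + m.1, m.2)) :
    ((p • f) m.2).coeff (δ₀ + m.1) = p.coeff δ₀ * ord.lc f := by
  rw [Pi.smul_apply, smul_eq_mul, coeff_mul, lc_eq_coeff hf]
  refine Finset.sum_eq_single (δ₀, m.1) ?_ (fun h => absurd (by simp) h)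
  rintro ⟨x, y⟩ hxy hne
  by_contra h
  have hx : x ∈ p.support := mem_support_iff.2 (left_ne_zero_of_mul h)
  have hy : ((y, m.2) : ModMon n d) ∈ suppF f := mem_suppF.2 (right_ne_zero_of_mul h)
  replace hxy : x + y = δ₀ + m.1 := Finset.HasAntidiagonal.mem_antidiagonal.1 hxy
  -- `x + y` is squeezed between `x + m.1` and `δ₀ + m.1 = x + y`.
  have heq : ((x + m.1, m.2) : ModMon n d) = (δ₀ + m.1, m.2) :=
    ord.toOrd.le_antisymm _ _ (hmax x hx)
      (hxy ▸ ord.add_le x _ _ _ _ (le_of_mem_suppF hf hy))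
  have hxδ : x = δ₀ := add_right_cancel (congrArg Prod.fst heq)
  subst hxδ
  exact hne (by rw [add_left_cancel hxy])

theorem lmo_smul_eq {p : MvPolynomial (Fin n) k} {f : FreeMod k n d} {m : ModMon n d}
    {δ₀ : Fin n →₀ ℕ} (hf : ord.lmo f = m) (hδ₀ : δ₀ ∈ p.support)
    (hmax : ∀ δ ∈ p.support, (δ + m.1, m.2) ≼[ord] (δ₀ + m.1, m.2)) :
    ord.lmo (p • f) = ((δ₀ + m.1, m.2) : ModMon n d) := by
  refine lmo_eq_of_mem_of_forall_le ?_ fun m' hm' => ?_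
  · rw [mem_suppF, coeff_smul_of_forall_le hf hmax]
    exact mul_ne_zero (mem_support_iff.1 hδ₀) (lc_ne_zero hf)
  · obtain ⟨δ, hδ, hle⟩ := exists_le_of_mem_suppF_smul hf hm'
    exact ord.toOrd.le_trans _ _ _ hle (hmax δ hδ)

theorem leB_lmo_smul {p : MvPolynomial (Fin n) k} {f : FreeMod k n d} {m : ModMon n d}
    {δ : Fin n →₀ ℕ} (hf : ord.lmo f = m) (hδ : δ ∈ p.support) :
    ord.leB ((δ + m.1, m.2) : ModMon n d) (ord.lmo (p • f)) := by
  obtain ⟨δ₀, hδ₀, hmax⟩ := @Finset.exists_max_image _ _ ord.toOrd p.support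
    (fun δ => ((δ + m.1, m.2) : ModMon n d)) ⟨δ, hδ⟩
  rw [lmo_smul_eq hf hδ₀ hmax, leB_coe_coe]
  exact hmax δ hδ

theorem lmo_monomial_smul {β : Fin n →₀ ℕ} {c : k} {f : FreeMod k n d} {m : ModMon n d}
    (hc : c ≠ 0) (hf : ord.lmo f = m) :
    ord.lmo (monomial β c • f) = ((β + m.1, m.2) : ModMon n d) ∧
      ord.lc (monomial β c • f) = c * ord.lc f := by
  have hmax : ∀ δ ∈ (monomial β c).support, (δ + m.1, m.2) ≼[ord] (β + m.1, m.2) := by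
    intro δ hδ
    rw [support_monomial, if_neg hc, Finset.mem_singleton] at hδ
    exact hδ ▸ ord.toOrd.le_refl _
  have hlmo := lmo_smul_eq hf (by simp [support_monomial, hc]) hmax
  refine ⟨hlmo, ?_⟩
  rw [lc_eq_coeff hlmo, coeff_smul_of_forall_le hf hmax, coeff_monomial, if_pos rfl]

theorem ne_zero_of_lmo_eq {f : FreeMod k n d} {m : ModMon n d} (h : ord.lmo f = m) : f ≠ 0 := by
  rintro rfl
  rw [(ord.lmo_eq_bot_iff).2 rfl] at h
  exact WithBot.bot_ne_coe h

theorem lmo_sum_smul_eq {ι : Type*} [Fintype ι] {p : ι → MvPolynomial (Fin n) k}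
    {f : ι → FreeMod k n d} {m : ι → ModMon n d} (hf : ∀ l, ord.lmo (f l) = m l) {l₀ : ι}
    {α : Fin n →₀ ℕ} (hα : α ∈ (p l₀).support)
    (hle : ∀ l, ∀ δ ∈ (p l).support, (δ + (m l).1, (m l).2) ≼[ord] (α + (m l₀).1, (m l₀).2))
    (huniq : ∀ l, ∀ δ ∈ (p l).support,
      (δ + (m l).1, (m l).2) = (α + (m l₀).1, (m l₀).2) → l = l₀) :
    ord.lmo (∑ l, p l • f l) = ((α + (m l₀).1, (m l₀).2) : ModMon n d) := by
  have hlt : ∀ l ≠ l₀, ∀ μ ∈ suppF (p l • f l), μ ≺[ord] (α + (m l₀).1, (m l₀).2) := by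
    intro l hl μ hμ
    obtain ⟨δ, hδ, hμδ⟩ := exists_le_of_mem_suppF_smul (hf l) hμ
    exact @lt_of_le_of_lt _ ord.toOrd.toPreorder _ _ _ hμδ
      (@lt_of_le_of_ne _ ord.toOrd.toPartialOrder _ _ (hle l δ hδ) fun h => hl (huniq l δ hδ h))
  refine lmo_eq_of_mem_of_forall_le ?_ fun μ hμ => ?_
  · rw [mem_suppF, Finset.sum_apply, coeff_sum,
      Finset.sum_eq_single l₀ (fun l _ hl => ?_) (by simp),
      coeff_smul_of_forall_le (hf l₀) (hle l₀)]
    · exact mul_ne_zero (mem_support_iff.1 hα) (lc_ne_zero (hf l₀))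
    · by_contra h
      exact @lt_irrefl _ ord.toOrd.toPreorder _ (hlt l hl _ (mem_suppF.2 h))
  · obtain ⟨l, -, hμl⟩ := exists_mem_suppF_of_mem_suppF_sum _ _ hμ
    obtain ⟨δ, hδ, hμδ⟩ := exists_le_of_mem_suppF_smul (hf l) hμl
    exact ord.toOrd.le_trans _ _ _ hμδ (hle l δ hδ)

theorem exists_monDvd_of_mem_span_lmVec {G : Set (FreeMod k n d)} {v : FreeMod k n d}
    (hv : v ∈ Submodule.span (MvPolynomial (Fin n) k) (ord.lmVec '' G)) {μ : ModMon n d}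
    (hμ : μ ∈ suppF v) : ∃ g ∈ G, ∃ m : ModMon n d, ord.lmo g = m ∧ MonDvd m μ := by
  induction hv using Submodule.span_induction generalizing μ with
  | mem _ hx =>
    obtain ⟨g, hg, rfl⟩ := hx
    cases hgm : ord.lmo g with
    | bot => simp [lmVec, hgm, suppF_eq_empty.2] at hμ
    | coe m =>
      rw [lmVec_eq hgm, suppF_mmVec, Finset.mem_singleton] at hμ
      exact ⟨g, hg, m, hgm, hμ ▸ ⟨rfl, le_rfl⟩⟩
  | zero => simp [suppF_eq_empty.2] at hμ
  | add u v _ _ hu hv => exact (mem_suppF_add hμ).elim hu hv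
  | smul p v _ hv =>
    obtain ⟨x, y, hxy, -, hy⟩ := exists_add_eq_of_mem_suppF_smul hμ
    obtain ⟨g, hg, m, hgm, hdvd⟩ := hv hy
    exact ⟨g, hg, m, hgm, hdvd.1, hxy ▸ le_add_left hdvd.2⟩

theorem mem_span_of_forall_exists_monDvd {W : Submodule (MvPolynomial (Fin n) k) (FreeMod k n d)}
    {H : Set (FreeMod k n d)} (hHW : H ⊆ W)
    (hdvd : ∀ v ∈ W, ∀ μ : ModMon n d, ord.lmo v = μ →
      ∃ h ∈ H, ∃ m : ModMon n d, ord.lmo h = m ∧ MonDvd m μ)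
    {v : FreeMod k n d} (hv : v ∈ W) : v ∈ Submodule.span (MvPolynomial (Fin n) k) H := by
  by_cases hv0 : v = 0
  · exact hv0 ▸ Submodule.zero_mem _
  obtain ⟨μ, hμ⟩ := ord.exists_lmo_eq hv0
  induction μ using ord.wf.induction generalizing v with
  | _ μ ih =>
    obtain ⟨h, hH, m, hm, hdvd⟩ := hdvd v hv μ hμ
    -- Cancel the leading term of `v` against a monomial multiple of `h`.
    set q := monomial (μ.1 - m.1) (ord.lc v * (ord.lc h)⁻¹)
    have hq := lmo_monomial_smul (β := μ.1 - m.1)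
      (mul_ne_zero (lc_ne_zero hμ) (inv_ne_zero (lc_ne_zero hm))) hm
    rw [tsub_add_cancel_of_le hdvd.2, hdvd.1, Prod.mk.eta, mul_assoc,
      inv_mul_cancel₀ (lc_ne_zero hm), mul_one] at hq
    have hlt : ∀ μ' ∈ suppF (v - q • h), μ' ≺[ord] μ :=
      suppF_sub_lt (fun _ => le_of_mem_suppF hμ) (fun _ => le_of_mem_suppF hq.1)
        (by rw [← lc_eq_coeff hμ, ← lc_eq_coeff hq.1, hq.2])
    have hqh : q • h ∈ Submodule.span (MvPolynomial (Fin n) k) H :=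
      Submodule.smul_mem _ q (Submodule.subset_span hH)
    rw [← sub_add_cancel v (q • h)]
    refine Submodule.add_mem _ ?_ hqh
    by_cases hr0 : v - q • h = 0
    · exact hr0 ▸ Submodule.zero_mem _
    obtain ⟨μ', hμ'⟩ := ord.exists_lmo_eq hr0
    exact ih μ' (hlt μ' (mem_suppF_of_lmo_eq hμ'))
      (W.sub_mem hv (W.smul_mem q (hHW hH))) hr0 hμ'

theorem isGB_of_forall_exists_monDvd {W : Submodule (MvPolynomial (Fin n) k) (FreeMod k n d)}
    {H : Finset (FreeMod k n d)} (hHW : (H : Set (FreeMod k n d)) ⊆ W)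
    (hdvd : ∀ v ∈ W, ∀ μ : ModMon n d, ord.lmo v = μ →
      ∃ h ∈ H, ∃ m : ModMon n d, ord.lmo h = m ∧ MonDvd m μ) :
    IsGB ord W H := by
  refine ⟨le_antisymm (Submodule.span_le.2 hHW)
    fun v hv => mem_span_of_forall_exists_monDvd hHW hdvd hv, le_antisymm ?_ ?_⟩
  · refine Submodule.span_le.2 ?_
    rintro _ ⟨h, hH, rfl⟩
    by_cases h0 : h = 0
    · rw [h0, lmVec_zero]
      exact Submodule.zero_mem _
    · exact Submodule.subset_span ⟨h, hHW hH, h0, rfl⟩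
  · refine Submodule.span_le.2 ?_
    rintro _ ⟨v, hv, hv0, rfl⟩
    obtain ⟨μ, hμ⟩ := ord.exists_lmo_eq hv0
    obtain ⟨h, hH, m, hm, hdvd⟩ := hdvd v hv μ hμ
    rw [lmVec_eq hμ, ← monomial_smul_mmVec (k := k) hdvd, ← lmVec_eq hm]
    exact Submodule.smul_mem _ _ (Submodule.subset_span ⟨h, hH, rfl⟩)

end ModMonOrder

open ModMonOrder

def IsStdRep {s : ℕ} (ord : ModMonOrder n d) (g : Fin s → FreeMod k n d)
    (c : Fin s → MvPolynomial (Fin n) k) (f : FreeMod k n d) : Prop :=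
  f = ∑ l, c l • g l ∧ ∀ l, ord.leB (ord.lmo (c l • g l)) (ord.lmo f)

def IsSchreyerOrder {t : ℕ} (ord : ModMonOrder n d) (g : Fin t → FreeMod k n d)
    (ordS : ModMonOrder n t) : Prop :=
  ∀ (α β : Fin n →₀ ℕ) (i j : Fin t) (mi mj : ModMon n d),
    ord.lmo (g i) = mi → ord.lmo (g j) = mj →
    ((α, i) ≺[ordS] (β, j) ↔
      (α + mi.1, mi.2) ≺[ord] (β + mj.1, mj.2) ∨
        ((α + mi.1, mi.2) = (β + mj.1, mj.2) ∧ j < i))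

section Schreyer

variable {s t : ℕ} {ord : ModMonOrder n d}

theorem IsStdRep.lt_of_mem_support {g : Fin s → FreeMod k n d}
    {c : Fin s → MvPolynomial (Fin n) k} {f : FreeMod k n d} (hrep : IsStdRep ord g c f)
    {M : ModMon n d} (hM : ∀ m ∈ suppF f, m ≺[ord] M) ⦃w : Fin s⦄ ⦃mw : ModMon n d⦄
    (hw : ord.lmo (g w) = mw) ⦃δ : Fin n →₀ ℕ⦄ (hδ : δ ∈ (c w).support) :
    (δ + mw.1, mw.2) ≺[ord] M :=
  lt_of_leB_lmo (leB_trans (leB_lmo_smul hw hδ) (hrep.2 w)) hM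

theorem IsSchreyerOrder.le_of_mem_support {g : Fin t → FreeMod k n d} {ordS : ModMonOrder n t}
    (hS : IsSchreyerOrder ord g ordS) {m : Fin t → ModMon n d} (hm : ∀ l, ord.lmo (g l) = m l)
    {v : FreeMod k n t} {α : Fin n →₀ ℕ} {i₀ : Fin t} (hv : ordS.lmo v = ((α, i₀) : ModMon n t))
    {l : Fin t} {δ : Fin n →₀ ℕ} (hδ : δ ∈ (v l).support) :
    (δ + (m l).1, (m l).2) ≼[ord] (α + (m i₀).1, (m i₀).2) ∧
      ((δ + (m l).1, (m l).2) = (α + (m i₀).1, (m i₀).2) → i₀ ≤ l) := by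
  have hle := le_of_mem_suppF hv
    (mem_suppF.2 (mem_support_iff.1 hδ) : ((δ, l) : ModMon n t) ∈ suppF v)
  rcases @lt_or_eq_of_le _ ordS.toOrd.toPartialOrder _ _ hle with hlt | heq
  · rcases (hS δ α l i₀ (m l) (m i₀) (hm l) (hm i₀)).1 hlt with hlt' | ⟨heq', hli⟩
    · exact ⟨@le_of_lt _ ord.toOrd.toPreorder _ _ hlt',
        fun h => absurd h (@ne_of_lt _ ord.toOrd.toPreorder _ _ hlt')⟩
    · exact ⟨heq' ▸ ord.toOrd.le_refl _, fun _ => hli.le⟩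
  · obtain ⟨rfl, rfl⟩ := Prod.mk.inj heq
    exact ⟨ord.toOrd.le_refl _, fun _ => le_rfl⟩

theorem sPoly_eq {f h : FreeMod k n d} {mf mh : ModMon n d} (hf : ord.lmo f = mf)
    (hh : ord.lmo h = mh) (hc : mf.2 = mh.2) :
    sPoly ord f h = monomial (mf.1 ⊔ mh.1 - mf.1) (ord.lc f)⁻¹ • f
      - monomial (mf.1 ⊔ mh.1 - mh.1) (ord.lc h)⁻¹ • h := by
  simp only [sPoly, hf, hh, WithBot.recBotCoe_coe, if_pos hc]

theorem suppF_sPoly_lt {f h : FreeMod k n d} {mf mh : ModMon n d} (hf : ord.lmo f = mf)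
    (hh : ord.lmo h = mh) (hc : mf.2 = mh.2) :
    ∀ m ∈ suppF (sPoly ord f h), m ≺[ord] (mf.1 ⊔ mh.1, mf.2) := by
  have hf' := lmo_monomial_smul (β := mf.1 ⊔ mh.1 - mf.1) (inv_ne_zero (lc_ne_zero hf)) hf
  have hh' := lmo_monomial_smul (β := mf.1 ⊔ mh.1 - mh.1) (inv_ne_zero (lc_ne_zero hh)) hh
  rw [tsub_add_cancel_of_le le_sup_left, inv_mul_cancel₀ (lc_ne_zero hf)] at hf'
  rw [tsub_add_cancel_of_le le_sup_right, inv_mul_cancel₀ (lc_ne_zero hh), ← hc] at hh'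
  rw [sPoly_eq hf hh hc]
  exact suppF_sub_lt (fun _ => le_of_mem_suppF hf'.1) (fun _ => le_of_mem_suppF hh'.1)
    (by rw [← lc_eq_coeff hf'.1, ← lc_eq_coeff hh'.1, hf'.2, hh'.2])

variable {g : Fin s → FreeMod k n d} {a : Fin s → Fin s → Fin s → MvPolynomial (Fin n) k}

theorem schreyerVec_eq {i j : Fin s} {mi mj : ModMon n d} (hi : ord.lmo (g i) = mi)
    (hj : ord.lmo (g j) = mj) (hc : mi.2 = mj.2) :
    schreyerVec ord g a i j =
      Pi.single i (monomial (mi.1 ⊔ mj.1 - mi.1) (ord.lc (g i))⁻¹)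
        - Pi.single j (monomial (mi.1 ⊔ mj.1 - mj.1) (ord.lc (g j))⁻¹) - a i j := by
  simp only [schreyerVec, hi, hj, WithBot.recBotCoe_coe, if_pos hc]

theorem combMap_apply (g : Fin t → FreeMod k n d) (v : FreeMod k n t) :
    combMap g v = ∑ i, v i • g i :=
  rfl

theorem combMap_single (g : Fin t → FreeMod k n d) (i : Fin t)
    (q : MvPolynomial (Fin n) k) : combMap g (Pi.single i q) = q • g i := by
  simp [combMap_apply, Pi.single_apply]

theorem combMap_schreyerVec {i j : Fin s} (hrep : sPoly ord (g i) (g j) = ∑ l, a i j l • g l) :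
    combMap g (schreyerVec ord g a i j) = 0 := by
  cases hi : ord.lmo (g i) with
  | bot => simp [schreyerVec, hi]
  | coe mi =>
    cases hj : ord.lmo (g j) with
    | bot => simp [schreyerVec, hi, hj]
    | coe mj =>
      by_cases hc : mi.2 = mj.2
      · rw [schreyerVec_eq hi hj hc, map_sub, map_sub, combMap_single, combMap_single,
          combMap_apply, ← hrep, sPoly_eq hi hj hc, sub_self]
      · simp [schreyerVec, hi, hj, hc]

theorem combMap_castLE_mem (hts : t ≤ s)
    {U : Submodule (MvPolynomial (Fin n) k) (FreeMod k n d)} (hU : ∀ w : Fin s, t ≤ w.val → g w ∈ U)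
    {v : FreeMod k n s} (hv : combMap g v ∈ U) :
    combMap (fun i : Fin t => g (Fin.castLE hts i)) (fun i => v (Fin.castLE hts i)) ∈ U := by
  obtain ⟨r, rfl⟩ := Nat.exists_eq_add_of_le hts
  rw [combMap_apply, Fin.sum_univ_add] at hv
  have htail : ∑ i : Fin r, v (Fin.natAdd t i) • g (Fin.natAdd t i) ∈ U :=
    U.sum_mem fun i _ => U.smul_mem _ (hU _ (Nat.le_add_right _ _))
  have hhead := U.sub_mem hv htail
  rwa [add_sub_cancel_right] at hhead

variable {ordS : ModMonOrder n t}

theorem lmo_schreyerVec_castLE (hts : t ≤ s)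
    (hS : IsSchreyerOrder ord (fun l : Fin t => g (Fin.castLE hts l)) ordS)
    (hg0 : ∀ l : Fin t, g (Fin.castLE hts l) ≠ 0) {i j : Fin s} (hij : i < j) (hit : i.val < t)
    {mi mj : ModMon n d} (hi : ord.lmo (g i) = mi) (hj : ord.lmo (g j) = mj) (hc : mi.2 = mj.2)
    (hstd : IsStdRep ord g (a i j) (sPoly ord (g i) (g j))) :
    ordS.lmo (fun l : Fin t => schreyerVec ord g a i j (Fin.castLE hts l)) =
      ((mi.1 ⊔ mj.1 - mi.1, ⟨i.val, hit⟩) : ModMon n t) := by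
  set γ := mi.1 ⊔ mj.1
  set i' : Fin t := ⟨i.val, hit⟩
  have hi' : Fin.castLE hts i' = i := rfl
  have hγi : γ - mi.1 + mi.1 = γ := tsub_add_cancel_of_le le_sup_left
  have hγj : γ - mj.1 + mj.1 = γ := tsub_add_cancel_of_le le_sup_right
  have hsmall := hstd.lt_of_mem_support (suppF_sPoly_lt hi hj hc)
  have hentry : ∀ l : Fin t, ∀ δ, (schreyerVec ord g a i j (Fin.castLE hts l)).coeff δ =
      (if Fin.castLE hts l = i ∧ δ = γ - mi.1 then (ord.lc (g i))⁻¹ else 0)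
        - (if Fin.castLE hts l = j ∧ δ = γ - mj.1 then (ord.lc (g j))⁻¹ else 0)
        - (a i j (Fin.castLE hts l)).coeff δ := by
    intro l δ
    rw [schreyerVec_eq hi hj hc]
    simp only [Pi.sub_apply, Pi.single_apply, coeff_sub, apply_ite (coeff δ), coeff_monomial,
      coeff_zero, ite_and, eq_comm (a := δ)]
    rfl
  refine lmo_eq_of_mem_of_forall_le ?_ ?_
  · have ha0 : (a i j i).coeff (γ - mi.1) = 0 := by
      by_contra h
      have := hsmall hi (mem_support_iff.2 h)
      rw [hγi] at this
      exact @lt_irrefl _ ord.toOrd.toPreorder _ this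
    rw [mem_suppF, hentry, if_pos ⟨hi', rfl⟩, if_neg fun h => hij.ne (hi' ▸ h.1), hi', ha0]
    simpa using lc_ne_zero hi
  · rintro ⟨δ, l⟩ hδl
    rw [mem_suppF, hentry] at hδl
    obtain ⟨ml, hml⟩ := ord.exists_lmo_eq (hg0 l)
    by_cases hli : Fin.castLE hts l = i ∧ δ = γ - mi.1
    · obtain ⟨hli, rfl⟩ := hli
      obtain rfl : l = i' := Fin.castLE_injective hts (hli.trans hi'.symm)
      exact ordS.toOrd.le_refl _
    refine @le_of_lt _ ordS.toOrd.toPreorder _ _ ((hS δ (γ - mi.1) l i' _ mi hml hi).2 ?_)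
    by_cases hlj : Fin.castLE hts l = j ∧ δ = γ - mj.1
    · -- the term `m_j e_j` is below `m_i e_i` only through the tie-break `i < j`
      obtain ⟨hlj, rfl⟩ := hlj
      rw [← hlj, hml] at hj
      obtain rfl := WithBot.coe_injective hj
      have hil : i < Fin.castLE hts l := hlj ▸ hij
      exact Or.inr ⟨by rw [hγj, hγi, hc], hil⟩
    · rw [if_neg hli, if_neg hlj, sub_zero, zero_sub, neg_ne_zero] at hδl
      rw [hγi]
      exact Or.inl (hsmall hml (mem_support_iff.2 hδl))

theorem exists_gt_lmo_monDvd (hts : t ≤ s)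
    (hS : IsSchreyerOrder ord (fun l : Fin t => g (Fin.castLE hts l)) ordS)
    (hg0 : ∀ l : Fin t, g (Fin.castLE hts l) ≠ 0)
    {U : Submodule (MvPolynomial (Fin n) k) (FreeMod k n d)}
    (hGU : ord.lmSub U ≤
      Submodule.span (MvPolynomial (Fin n) k) (ord.lmVec '' (g '' {j | t ≤ j.val})))
    {v : FreeMod k n t} (hv : combMap (fun l : Fin t => g (Fin.castLE hts l)) v ∈ U)
    {α : Fin n →₀ ℕ} {i₀ : Fin t} (hvα : ordS.lmo v = ((α, i₀) : ModMon n t))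
    {mi : ModMon n d} (hmi : ord.lmo (g (Fin.castLE hts i₀)) = mi) :
    ∃ j : Fin s, Fin.castLE hts i₀ < j ∧
      ∃ mj : ModMon n d, ord.lmo (g j) = mj ∧ MonDvd mj (α + mi.1, mi.2) := by
  choose m hm using fun l => ord.exists_lmo_eq (hg0 l)
  obtain rfl : m i₀ = mi := WithBot.coe_injective ((hm i₀).symm.trans hmi)
  have hcmp := fun l δ (hδ : δ ∈ (v l).support) => hS.le_of_mem_support hm hvα hδ
  by_cases hA : ∃ l, ∃ δ ∈ (v l).support, l ≠ i₀ ∧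
      (δ + (m l).1, (m l).2) = (α + (m i₀).1, (m i₀).2)
  · obtain ⟨l, δ, hδ, hl, heq⟩ := hA
    obtain ⟨hexp, hcomp⟩ := Prod.mk.inj heq
    have hil : i₀ < l := lt_of_le_of_ne ((hcmp l δ hδ).2 heq) (Ne.symm hl)
    refine ⟨Fin.castLE hts l, hil, m l, hm l, hcomp, ?_⟩
    rw [← hexp]
    exact le_add_self
  · push Not at hA
    have hlmo : ord.lmo (combMap (fun l : Fin t => g (Fin.castLE hts l)) v) =
        ((α + (m i₀).1, (m i₀).2) : ModMon n d) :=
      lmo_sum_smul_eq hm (mem_support_iff.2 (mem_suppF.1 (mem_suppF_of_lmo_eq hvα)))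
        (fun l δ hδ => (hcmp l δ hδ).1) (fun l δ hδ h => by_contra fun hl => hA l δ hδ hl h)
    have hmem : ord.lmVec (combMap (fun l : Fin t => g (Fin.castLE hts l)) v) ∈ ord.lmSub U :=
      Submodule.subset_span ⟨_, hv, ne_zero_of_lmo_eq hlmo, rfl⟩
    rw [lmVec_eq hlmo] at hmem
    obtain ⟨_, ⟨j, hj, rfl⟩, mj, hmj, hdvd⟩ := exists_monDvd_of_mem_span_lmVec (hGU hmem)
      (by rw [suppF_mmVec]; exact Finset.mem_singleton_self _)
    exact ⟨j, Fin.lt_def.2 (i₀.isLt.trans_le hj), mj, hmj, hdvd⟩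

end Schreyer

end

theorem relative_schreyer_general {k : Type*} [Field k] {n d s t : ℕ} (hts : t ≤ s)
    (ord : ModMonOrder n d)
    (U V : Submodule (MvPolynomial (Fin n) k) (FreeMod k n d))
    (g : Fin s → FreeMod k n d)
    (hGV : IsRedRelGB ord U V
      (Finset.univ.image fun i : Fin t => g (Fin.castLE hts i)))
    (hGU : IsGB ord U
      (((Finset.univ : Finset (Fin s)).filter fun i : Fin s => t ≤ i.val).image g))
    (a : Fin s → Fin s → Fin s → MvPolynomial (Fin n) k)
    (ha : ∀ i j : Fin s, i < j →
      sPoly ord (g i) (g j) = ∑ l, a i j l • g l ∧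
        ∀ l, ord.leB (ord.lmo (a i j l • g l)) (ord.lmo (sPoly ord (g i) (g j))))
    (ordS : ModMonOrder n t)
    (hordS : ∀ (α β : Fin n →₀ ℕ) (i j : Fin t) (mi mj : ModMon n d),
      ord.lmo (g (Fin.castLE hts i)) = (mi : WithBot (ModMon n d)) →
      ord.lmo (g (Fin.castLE hts j)) = (mj : WithBot (ModMon n d)) →
      (ordS.toOrd.lt (α, i) (β, j) ↔
        ord.toOrd.lt (α + mi.1, mi.2) (β + mj.1, mj.2) ∨
          ((α + mi.1, mi.2) = (β + mj.1, mj.2) ∧ j < i))) :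
    IsGB ordS
      (Submodule.comap (combMap fun i : Fin t => g (Fin.castLE hts i)) U)
      ((((Finset.univ : Finset (Fin s × Fin s)).filter
          fun p : Fin s × Fin s => p.1 < p.2 ∧ p.1.val < t).image
        fun p => fun i : Fin t => schreyerVec ord g a p.1 p.2 (Fin.castLE hts i))) := by
  -- the elements of the relative Gröbner basis avoid `U`, so in particular are nonzero
  have hg0 : ∀ l : Fin t, g (Fin.castLE hts l) ≠ 0 := fun l h0 =>
    (hGV.1.1.1 (Finset.mem_image_of_mem _ (Finset.mem_univ l))).2 (h0 ▸ U.zero_mem)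
  have hU : ∀ w : Fin s, t ≤ w.val → g w ∈ U := fun w hw =>
    hGU.1 ▸ Submodule.subset_span (Finset.mem_image_of_mem g (by simpa using hw))
  refine ModMonOrder.isGB_of_forall_exists_monDvd ?_ fun v hv ⟨α, i₀⟩ hvα => ?_
  · intro _ hx
    obtain ⟨⟨i, j⟩, hp, rfl⟩ := Finset.mem_image.1 hx
    refine combMap_castLE_mem hts hU ?_
    rw [combMap_schreyerVec (ha i j (Finset.mem_filter.1 hp).2.1).1]
    exact U.zero_mem
  obtain ⟨mi, hmi⟩ := ord.exists_lmo_eq (hg0 i₀)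
  obtain ⟨j, hij, mj, hmj, hc, hle⟩ := exists_gt_lmo_monDvd hts hordS hg0
    (by simpa using hGU.2.ge) hv hvα hmi
  refine ⟨_, Finset.mem_image_of_mem _
    (Finset.mem_filter.2 ⟨Finset.mem_univ (_, j), hij, i₀.isLt⟩), _,
    lmo_schreyerVec_castLE hts hordS hg0 hij i₀.isLt hmi hmj hc.symm (ha _ j hij), rfl, ?_⟩
  exact tsub_le_iff_right.2 (sup_le le_add_self hle)

/-- **Relative Schreyer's theorem.** Let `g_1, …, g_t` be the reduced Gröbner basis of `V`
relative to `U` and `g_{t+1}, …, g_s` a Gröbner basis of `U`; choose standard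
representations `S(g_i, g_j) = Σ_l a_{ijl} g_l`. Then the projections to the first `t`
coordinates of the Schreyer syzygies `S_{ij}` with `i < j` and `i ≤ t` form a Gröbner basis
of `ker ψ = Syz(g_1 + U, …, g_t + U)`, where `ψ : R^t → V/U, e_i ↦ g_i + U`, with respect
to the Schreyer order `≺_G` restricted to module monomials `X^α e_i` with `i ≤ t`. -/
theorem relative_schreyer {k : Type*} [Field k] {n d s t : ℕ} (hts : t ≤ s)
    (ord : ModMonOrder n d)
    (U V : Submodule (MvPolynomial (Fin n) k) (FreeMod k n d))
    (hUV : U ≤ V)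
    (g : Fin s → FreeMod k n d) (hginj : Function.Injective g)
    (hGV : IsRedRelGB ord U V
      (Finset.univ.image fun i : Fin t => g (Fin.castLE hts i)))
    (hGU : IsGB ord U
      (((Finset.univ : Finset (Fin s)).filter fun i : Fin s => t ≤ i.val).image g))
    (a : Fin s → Fin s → Fin s → MvPolynomial (Fin n) k)
    (ha : ∀ i j : Fin s, i < j →
      sPoly ord (g i) (g j) = ∑ l, a i j l • g l ∧
        ∀ l, ord.leB (ord.lmo (a i j l • g l)) (ord.lmo (sPoly ord (g i) (g j))))
    (ordS : ModMonOrder n t)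
    (hordS : ∀ (α β : Fin n →₀ ℕ) (i j : Fin t) (mi mj : ModMon n d),
      ord.lmo (g (Fin.castLE hts i)) = (mi : WithBot (ModMon n d)) →
      ord.lmo (g (Fin.castLE hts j)) = (mj : WithBot (ModMon n d)) →
      (ordS.toOrd.lt (α, i) (β, j) ↔
        ord.toOrd.lt (α + mi.1, mi.2) (β + mj.1, mj.2) ∨
          ((α + mi.1, mi.2) = (β + mj.1, mj.2) ∧ j < i))) :
    IsGB ordS
      (Submodule.comap (combMap fun i : Fin t => g (Fin.castLE hts i)) U)
      ((((Finset.univ : Finset (Fin s × Fin s)).filter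
          fun p : Fin s × Fin s => p.1 < p.2 ∧ p.1.val < t).image
        fun p => fun i : Fin t => schreyerVec ord g a p.1 p.2 (Fin.castLE hts i))) :=
  relative_schreyer_general hts ord U V g hGV hGU a ha ordS hordS
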